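/- Let H be a real Hilbert space, f: H → ℝ ∪ {+∞} proper, lsc, convex, and λ > 0. Then f is almost strictly convex if and only if the Moreau envelope e_λ f is strictly convex on H, if and only if the proximal mapping prox_{λf} is strictly nonexpansive, i.e., ‖prox_{λf}(x) - prox_{λf}(y)‖ < ‖x - y‖ for all x ≠ y. -/

import Mathlib

set_option linter.unusedSectionVars false


open scoped InnerProductSpace

variable {H : Type*} [NormedAddCommGroup H] [InnerProductSpace ℝ H] [CompleteSpace H]

/-- `f` is proper: not identically `⊤` and never `⊥`. -/
def IsProperFn (f : H → EReal) : Prop := (∃ x, f x ≠ ⊤) ∧ ∀ x, f x ≠ ⊥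

/-- `f` is convex (as an extended-real-valued function). -/
def IsConvexFn (f : H → EReal) : Prop :=
  ∀ x y : H, ∀ t : ℝ, 0 < t → t < 1 →
    f ((1 - t) • x + t • y) ≤ ((1 - t : ℝ) : EReal) * f x + ((t : ℝ) : EReal) * f y

/-- `f` is strictly convex on the set `s`. -/
def StrictConvexOnSet (f : H → EReal) (s : Set H) : Prop :=
  ∀ x ∈ s, ∀ y ∈ s, x ≠ y → ∀ t : ℝ, 0 < t → t < 1 →
    f ((1 - t) • x + t • y) < ((1 - t : ℝ) : EReal) * f x + ((t : ℝ) : EReal) * f y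

/-- The effective domain of `f`. -/
def domFn (f : H → EReal) : Set H := {x | f x ≠ ⊤}

/-- `f` is strictly convex (on its domain). -/
def IsStrictConvexFn (f : H → EReal) : Prop := StrictConvexOnSet f (domFn f)

/-- The convex subdifferential of `f` at `x`. -/
def subdiff (f : H → EReal) (x : H) : Set H :=
  {v | ∀ y : H, f x + ((⟪v, y - x⟫_ℝ : ℝ) : EReal) ≤ f y}

/-- The domain of the subdifferential. -/
def domSubdiff (f : H → EReal) : Set H := {x | (subdiff f x).Nonempty}

/-- `f` is almost strictly convex: strictly convex along every line segment in `dom ∂f`. -/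
def AlmostStrictlyConvex (f : H → EReal) : Prop :=
  ∀ x₀ x₁ : H, x₀ ≠ x₁ → segment ℝ x₀ x₁ ⊆ domSubdiff f →
    StrictConvexOnSet f (segment ℝ x₀ x₁)

/-- `∂f` is strictly monotone. -/
def StrictlyMonotoneSubdiff (f : H → EReal) : Prop :=
  ∀ x₀ x₁ v₀ v₁ : H, v₀ ∈ subdiff f x₀ → v₁ ∈ subdiff f x₁ → x₀ ≠ x₁ →
    0 < ⟪v₀ - v₁, x₀ - x₁⟫_ℝ

/-- The Moreau envelope of `f` with parameter `λ`. -/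
noncomputable def moreauEnv (f : H → EReal) (lam : ℝ) : H → EReal :=
  fun x => ⨅ w : H, f w + ((‖x - w‖ ^ 2 / (2 * lam) : ℝ) : EReal)

lemma ereal_real {x : EReal} (h1 : x ≠ ⊤) (h2 : x ≠ ⊥) : ∃ r : ℝ, x = r := by
  lift x to ℝ using ⟨h1, h2⟩; exact ⟨x, rfl⟩

lemma subdiff_real {f : H → EReal} {x y v : H} {r s : ℝ}
    (hv : v ∈ subdiff f x) (hx : f x = (r : EReal)) (hy : f y = (s : EReal)) :
    r + ⟪v, y - x⟫_ℝ ≤ s := by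
  have := hv y
  rw [hx, hy] at this
  exact_mod_cast this

lemma subdiff_fin {f : H → EReal} (hp : IsProperFn f) {x v : H}
    (hv : v ∈ subdiff f x) : ∃ r : ℝ, f x = (r : EReal) := by
  refine ereal_real ?_ (hp.2 x)
  intro h
  obtain ⟨w, hw⟩ := hp.1
  have := hv w
  rw [h] at this
  simp at this
  exact hw this

lemma fin_P {f : H → EReal} (hp : IsProperFn f) {lam : ℝ} {P : H → H}
    (hP : ∀ x w : H, f (P x) + ((‖x - P x‖ ^ 2 / (2 * lam) : ℝ) : EReal) ≤
      f w + ((‖x - w‖ ^ 2 / (2 * lam) : ℝ) : EReal)) (x : H) :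
    ∃ r : ℝ, f (P x) = (r : EReal) := by
  refine ereal_real ?_ (hp.2 _)
  intro h
  obtain ⟨w, hw⟩ := hp.1
  obtain ⟨s, hs⟩ := ereal_real hw (hp.2 w)
  have := hP x w
  rw [h, hs] at this
  simp at this
  exact (EReal.coe_ne_top _) this

lemma lem_mono {f : H → EReal} (hp : IsProperFn f) {x₀ x₁ v₀ v₁ : H}
    (h₀ : v₀ ∈ subdiff f x₀) (h₁ : v₁ ∈ subdiff f x₁) :
    0 ≤ ⟪v₀ - v₁, x₀ - x₁⟫_ℝ := by
  obtain ⟨r₀, hr₀⟩ := subdiff_fin hp h₀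
  obtain ⟨r₁, hr₁⟩ := subdiff_fin hp h₁
  have A := subdiff_real h₀ hr₀ hr₁
  have B := subdiff_real h₁ hr₁ hr₀
  have e1 : ⟪v₀ - v₁, x₀ - x₁⟫_ℝ = -⟪v₀, x₁ - x₀⟫_ℝ - ⟪v₁, x₀ - x₁⟫_ℝ := by
    rw [inner_sub_left]
    have : x₁ - x₀ = -(x₀ - x₁) := by abel
    rw [this, inner_neg_right]
    ring
  linarith [A, B, e1.ge, e1.le]

lemma lem_affine {f : H → EReal} (hp : IsProperFn f) (hc : IsConvexFn f)
    {x₀ x₁ v₀ v₁ : H} {r₀ : ℝ} (hr₀ : f x₀ = (r₀ : EReal))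
    (h₀ : v₀ ∈ subdiff f x₀) (h₁ : v₁ ∈ subdiff f x₁)
    (hd : ⟪v₀ - v₁, x₀ - x₁⟫_ℝ ≤ 0) :
    ∀ t : ℝ, 0 ≤ t → t ≤ 1 → v₀ ∈ subdiff f ((1 - t) • x₀ + t • x₁) ∧
      f ((1 - t) • x₀ + t • x₁) = ((r₀ + t * ⟪v₀, x₁ - x₀⟫_ℝ : ℝ) : EReal) := by
  obtain ⟨r₁, hr₁⟩ := subdiff_fin hp h₁
  set c : ℝ := ⟪v₀, x₁ - x₀⟫_ℝ with hc'
  have A := subdiff_real h₀ hr₀ hr₁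
  have B := subdiff_real h₁ hr₁ hr₀
  have e1 : ⟪v₀ - v₁, x₀ - x₁⟫_ℝ = -c - ⟪v₁, x₀ - x₁⟫_ℝ := by
    rw [inner_sub_left, hc']
    have : x₁ - x₀ = -(x₀ - x₁) := by abel
    rw [this, inner_neg_right]; ring
  have hr1c : r₁ = r₀ + c := by
    rw [e1] at hd; linarith
  -- general claim: for any point z with f z = r₀ + ⟪v₀, z - x₀⟫, v₀ ∈ subdiff f z
  have key : ∀ z : H, f z = ((r₀ + ⟪v₀, z - x₀⟫_ℝ : ℝ) : EReal) → v₀ ∈ subdiff f z := by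
    intro z hz y
    rw [hz, ← EReal.coe_add]
    have h0y := h₀ y
    rw [hr₀] at h0y
    have hin : ⟪v₀, z - x₀⟫_ℝ + ⟪v₀, y - z⟫_ℝ = ⟪v₀, y - x₀⟫_ℝ := by
      rw [← inner_add_right]; congr 1; abel
    rw [show r₀ + ⟪v₀, z - x₀⟫_ℝ + ⟪v₀, y - z⟫_ℝ = r₀ + ⟪v₀, y - x₀⟫_ℝ by linarith]
    rw [← EReal.coe_add] at h0y
    exact h0y
  intro t ht0 ht1
  rcases eq_or_lt_of_le ht0 with h0 | h0
  · subst h0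
    have hx : (1 - (0:ℝ)) • x₀ + (0:ℝ) • x₁ = x₀ := by simp
    rw [hx]
    constructor
    · exact h₀
    · rw [hr₀]; norm_num
  rcases eq_or_lt_of_le ht1 with h1 | h1
  · subst h1
    have hx : (1 - (1:ℝ)) • x₀ + (1:ℝ) • x₁ = x₁ := by simp
    rw [hx]
    have hfx : f x₁ = ((r₀ + 1 * c : ℝ) : EReal) := by rw [hr₁, hr1c]; norm_num
    refine ⟨key x₁ ?_, by rw [hfx]⟩
    simp [hfx, hc']
  -- interior case
  set z : H := (1 - t) • x₀ + t • x₁ with hz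
  have hzx : z - x₀ = t • (x₁ - x₀) := by rw [hz]; module
  have hinner : ⟪v₀, z - x₀⟫_ℝ = t * c := by rw [hzx, real_inner_smul_right]
  have hup : f z ≤ ((r₀ + t * c : ℝ) : EReal) := by
    have := hc x₀ x₁ t h0 h1
    rw [hr₀, hr₁, hr1c] at this
    calc f z ≤ ((1 - t : ℝ) : EReal) * ((r₀ : ℝ) : EReal) + ((t : ℝ) : EReal) * (((r₀ + c : ℝ)) : EReal) := this
    _ = ((r₀ + t * c : ℝ) : EReal) := by
        rw [← EReal.coe_mul, ← EReal.coe_mul, ← EReal.coe_add]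
        congr 1; ring
  have hlow : ((r₀ + t * c : ℝ) : EReal) ≤ f z := by
    have := h₀ z
    rw [hr₀, hinner, ← EReal.coe_add] at this
    exact this
  have hfz : f z = ((r₀ + t * c : ℝ) : EReal) := le_antisymm hup hlow
  exact ⟨key z (hfz.trans (by rw [hinner])), hfz⟩

lemma proxA {f : H → EReal} (hp : IsProperFn f) (hc : IsConvexFn f)
    {lam : ℝ} (hlam : 0 < lam) {P : H → H}
    (hP : ∀ x w : H, f (P x) + ((‖x - P x‖ ^ 2 / (2 * lam) : ℝ) : EReal) ≤
      f w + ((‖x - w‖ ^ 2 / (2 * lam) : ℝ) : EReal))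
    {z v : H} (hv : v ∈ subdiff f z) : P (z + lam • v) = z := by
  obtain ⟨r, hr⟩ := subdiff_fin hp hv
  set x : H := z + lam • v with hx
  have hxz : x - z = lam • v := by rw [hx]; abel
  have hnxz : ‖x - z‖ ^ 2 = lam ^ 2 * ‖v‖ ^ 2 := by
    rw [hxz, norm_smul, Real.norm_eq_abs, abs_of_pos hlam, mul_pow]
  -- step 1 : z is a minimizer
  have step1 : ∀ w : H, f z + ((‖x - z‖ ^ 2 / (2 * lam) : ℝ) : EReal) ≤
      f w + ((‖x - w‖ ^ 2 / (2 * lam) : ℝ) : EReal) := by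
    intro w
    rcases eq_or_ne (f w) ⊤ with hw | hw
    · rw [hw]; simp
    obtain ⟨s, hs⟩ := ereal_real hw (hp.2 w)
    have hsub := subdiff_real hv hr hs
    rw [hr, hs, ← EReal.coe_add, ← EReal.coe_add, EReal.coe_le_coe_iff]
    have hxw : x - w = (z - w) + lam • v := by rw [hx]; abel
    have hnxw : ‖x - w‖ ^ 2 = ‖z - w‖ ^ 2 + 2 * (lam * ⟪z - w, v⟫_ℝ) + lam ^ 2 * ‖v‖ ^ 2 := by
      rw [hxw, norm_add_sq_real, real_inner_smul_right, norm_smul, Real.norm_eq_abs,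
        abs_of_pos hlam, mul_pow]
    have hiwz : ⟪v, w - z⟫_ℝ = -⟪z - w, v⟫_ℝ := by
      rw [real_inner_comm]
      rw [show (w - z : H) = -(z - w) by abel, inner_neg_left]
    have hnn : 0 ≤ ‖z - w‖ ^ 2 := sq_nonneg _
    rw [hnxz, hnxw]
    rw [hiwz] at hsub
    have hBA : (‖z - w‖ ^ 2 + 2 * (lam * ⟪z - w, v⟫_ℝ) + lam ^ 2 * ‖v‖ ^ 2) / (2 * lam)
        - lam ^ 2 * ‖v‖ ^ 2 / (2 * lam) = ‖z - w‖ ^ 2 / (2 * lam) + ⟪z - w, v⟫_ℝ := by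
      field_simp; ring
    have hdiv : (0:ℝ) ≤ ‖z - w‖ ^ 2 / (2 * lam) := by positivity
    linarith
  -- step 2 : f (P x) is real
  obtain ⟨p, hpx⟩ := fin_P hp hP x
  -- step 3 : equal values
  have h31 := hP x z
  have h32 := step1 (P x)
  rw [hr, hpx, ← EReal.coe_add, ← EReal.coe_add, EReal.coe_le_coe_iff] at h31 h32
  -- step 4 : midpoint
  rcases eq_or_ne (P x) z with h | hne
  · exact h
  set m : H := (1 - (2⁻¹:ℝ)) • z + (2⁻¹:ℝ) • (P x) with hm
  have hcm := hc z (P x) 2⁻¹ (by norm_num) (by norm_num)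
  rw [hr, hpx, ← EReal.coe_mul, ← EReal.coe_mul, ← EReal.coe_add] at hcm
  have hmne : f m ≠ ⊤ := by
    intro h; rw [← hm, h] at hcm; exact (EReal.coe_ne_top _) (top_le_iff.mp hcm)
  obtain ⟨q, hq⟩ := ereal_real hmne (hp.2 m)
  rw [← hm, hq, EReal.coe_le_coe_iff] at hcm
  have hxm : x - m = (2⁻¹:ℝ) • (x - z) + (2⁻¹:ℝ) • (x - P x) := by rw [hm]; module
  have hab : (x - z) - (x - P x) = P x - z := by abel
  have hnm : ‖x - m‖ ^ 2 = ‖x - z‖ ^ 2 / 2 + ‖x - P x‖ ^ 2 / 2 - ‖P x - z‖ ^ 2 / 4 := by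
    rw [hxm, norm_add_sq_real, real_inner_smul_left, real_inner_smul_right,
      norm_smul, norm_smul]
    have hip : ⟪x - z, x - P x⟫_ℝ = (‖x - z‖ ^ 2 + ‖x - P x‖ ^ 2 - ‖P x - z‖ ^ 2) / 2 := by
      have := norm_sub_sq_real (x - z) (x - P x)
      rw [hab] at this
      linarith
    rw [hip]
    simp [Real.norm_eq_abs, mul_pow]
    ring
  have h5 := hP x m
  rw [hpx, hq, ← EReal.coe_add, ← EReal.coe_add, EReal.coe_le_coe_iff] at h5
  have hPz : ‖P x - z‖ ^ 2 ≤ 0 := by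
    have hE : (‖x - z‖ ^ 2 / 2 + ‖x - P x‖ ^ 2 / 2 - ‖P x - z‖ ^ 2 / 4) / (2 * lam)
        = (‖x - z‖ ^ 2 / (2 * lam)) / 2 + (‖x - P x‖ ^ 2 / (2 * lam)) / 2
          - ‖P x - z‖ ^ 2 / (8 * lam) := by
      field_simp; ring
    rw [hnm, hE] at h5
    have hN : ‖P x - z‖ ^ 2 / (8 * lam) ≤ 0 := by linarith
    by_contra hcon
    push_neg at hcon
    exact absurd (div_pos hcon (by positivity : (0:ℝ) < 8 * lam)) (not_lt.mpr hN)
  have : ‖P x - z‖ = 0 := by nlinarith [norm_nonneg (P x - z), hPz]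
  rw [norm_eq_zero, sub_eq_zero] at this
  exact this

lemma prox_grad {f : H → EReal} (hp : IsProperFn f) (hc : IsConvexFn f)
    {lam : ℝ} (hlam : 0 < lam) {P : H → H}
    (hP : ∀ x w : H, f (P x) + ((‖x - P x‖ ^ 2 / (2 * lam) : ℝ) : EReal) ≤
      f w + ((‖x - w‖ ^ 2 / (2 * lam) : ℝ) : EReal)) (x : H) :
    (lam⁻¹ : ℝ) • (x - P x) ∈ subdiff f (P x) := by
  obtain ⟨p, hpx⟩ := fin_P hp hP x
  set u : H := x - P x with hu
  intro y
  rcases eq_or_ne (f y) ⊤ with hy | hy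
  · rw [hy]; exact le_top
  obtain ⟨s, hs⟩ := ereal_real hy (hp.2 y)
  rw [hpx, hs, real_inner_smul_left, ← EReal.coe_add, EReal.coe_le_coe_iff]
  set I : ℝ := ⟪u, y - P x⟫_ℝ with hI
  set N : ℝ := ‖y - P x‖ ^ 2 with hN
  -- key : for all t ∈ (0,1), p + I/lam - t*N/(2*lam) ≤ s
  have key : ∀ t : ℝ, 0 < t → t < 1 → p + I / lam - t * N / (2 * lam) ≤ s := by
    intro t ht0 ht1
    have h1 := hP x ((1 - t) • P x + t • y)
    have h2 := hc (P x) y t ht0 ht1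
    have h3 : f ((1 - t) • P x + t • y) +
        ((‖x - ((1 - t) • P x + t • y)‖ ^ 2 / (2 * lam) : ℝ) : EReal) ≤
        (((1 - t) * p + t * s : ℝ) : EReal) +
        ((‖x - ((1 - t) • P x + t • y)‖ ^ 2 / (2 * lam) : ℝ) : EReal) := by
      refine add_le_add_left ?_ _
      rw [hpx, hs] at h2
      calc f ((1 - t) • P x + t • y) ≤ ((1 - t : ℝ) : EReal) * ((p : ℝ) : EReal)
            + ((t : ℝ) : EReal) * ((s : ℝ) : EReal) := h2
      _ = (((1 - t) * p + t * s : ℝ) : EReal) := by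
          rw [← EReal.coe_mul, ← EReal.coe_mul, ← EReal.coe_add]
    have h4 := le_trans h1 h3
    rw [hpx, ← EReal.coe_add, ← EReal.coe_add, EReal.coe_le_coe_iff] at h4
    have hxw : x - ((1 - t) • P x + t • y) = u - t • (y - P x) := by rw [hu]; module
    have hexp : ‖x - ((1 - t) • P x + t • y)‖ ^ 2 = ‖u‖ ^ 2 - 2 * (t * I) + t ^ 2 * N := by
      rw [hxw, norm_sub_sq_real, real_inner_smul_right, norm_smul, Real.norm_eq_abs,
        abs_of_pos ht0, mul_pow, hI, hN]
    rw [hexp] at h4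
    -- h4 : p + ‖u‖^2/(2 lam) ≤ (1-t) p + t s + (‖u‖^2 - 2 t I + t^2 N)/(2 lam)
    have hfs : (‖u‖ ^ 2 - 2 * (t * I) + t ^ 2 * N) / (2 * lam)
        = ‖u‖ ^ 2 / (2 * lam) - t * I / lam + t * (t * N / (2 * lam)) := by
      field_simp
    rw [hfs] at h4
    have ht : t * p + t * (I / lam) - t * (t * N / (2 * lam)) ≤ t * s := by
      have : t * I / lam = t * (I / lam) := by ring
      rw [this] at h4; linarith
    have := mul_le_mul_of_nonneg_left (le_of_sub_nonneg (by linarith)) (le_of_lt (inv_pos.mpr ht0))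
    -- simpler: divide by t
    nlinarith [ht, ht0, mul_pos ht0 ht0]
  have hNnn : 0 ≤ N := by rw [hN]; positivity
  by_contra hcon
  push_neg at hcon
  rw [show lam⁻¹ * I = I / lam by ring] at hcon
  set ε : ℝ := p + I / lam - s with he
  have hε : 0 < ε := by rw [he]; linarith
  rcases eq_or_lt_of_le hNnn with hN0 | hN0
  · have := key 2⁻¹ (by norm_num) (by norm_num)
    rw [← hN0] at this
    simp at this
    linarith
  · set t0 : ℝ := min 2⁻¹ (ε * lam / N) with ht0def
    have ht0pos : 0 < t0 := lt_min (by norm_num) (by positivity)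
    have ht0lt : t0 < 1 := lt_of_le_of_lt (min_le_left _ _) (by norm_num)
    have hkey := key t0 ht0pos ht0lt
    have hb : t0 * N / (2 * lam) ≤ ε / 2 := by
      have h1 : t0 ≤ ε * lam / N := min_le_right _ _
      have h2 : t0 * N ≤ ε * lam := by
        have h3 := mul_le_mul_of_nonneg_right h1 (le_of_lt hN0)
        rwa [div_mul_cancel₀ _ (ne_of_gt hN0)] at h3
      rw [div_le_div_iff₀ (by positivity) (by norm_num)]
      nlinarith
    linarith

lemma env_eq {f : H → EReal} {lam : ℝ} {P : H → H}
    (hP : ∀ x w : H, f (P x) + ((‖x - P x‖ ^ 2 / (2 * lam) : ℝ) : EReal) ≤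
      f w + ((‖x - w‖ ^ 2 / (2 * lam) : ℝ) : EReal)) (x : H) :
    moreauEnv f lam x = f (P x) + ((‖x - P x‖ ^ 2 / (2 * lam) : ℝ) : EReal) := by
  unfold moreauEnv
  exact le_antisymm (iInf_le _ (P x)) (le_iInf (hP x))

lemma sms_to_sne {f : H → EReal} (hp : IsProperFn f) (hc : IsConvexFn f)
    {lam : ℝ} (hlam : 0 < lam) {P : H → H}
    (hP : ∀ x w : H, f (P x) + ((‖x - P x‖ ^ 2 / (2 * lam) : ℝ) : EReal) ≤
      f w + ((‖x - w‖ ^ 2 / (2 * lam) : ℝ) : EReal))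
    (hm : StrictlyMonotoneSubdiff f) :
    ∀ x y : H, x ≠ y → ‖P x - P y‖ < ‖x - y‖ := by
  intro x y hxy
  have hxy' : 0 < ‖x - y‖ := by rw [norm_pos_iff, sub_ne_zero]; exact hxy
  rcases eq_or_ne (P x) (P y) with h | h
  · rw [h]; simpa using hxy'
  · have hu := prox_grad hp hc hlam hP x
    have hv := prox_grad hp hc hlam hP y
    have hmm := hm (P x) (P y) _ _ hu hv h
    have hfac : (lam⁻¹ : ℝ) • (x - P x) - (lam⁻¹ : ℝ) • (y - P y)
        = (lam⁻¹ : ℝ) • ((x - y) - (P x - P y)) := by module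
    rw [hfac, real_inner_smul_left] at hmm
    have hinv : 0 < (lam⁻¹ : ℝ) := inv_pos.mpr hlam
    have hpos : 0 < ⟪(x - y) - (P x - P y), P x - P y⟫_ℝ := by
      by_contra hcc; push_neg at hcc
      nlinarith [mul_nonpos_of_nonneg_of_nonpos (le_of_lt hinv) hcc]
    rw [inner_sub_left, real_inner_self_eq_norm_sq] at hpos
    have hcs := real_inner_le_norm (x - y) (P x - P y)
    have hn : 0 < ‖P x - P y‖ := by rw [norm_pos_iff, sub_ne_zero]; exact h
    nlinarith [hpos, hcs, hn]

lemma sne_to_sms {f : H → EReal} (hp : IsProperFn f) (hc : IsConvexFn f)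
    {lam : ℝ} (hlam : 0 < lam) {P : H → H}
    (hP : ∀ x w : H, f (P x) + ((‖x - P x‖ ^ 2 / (2 * lam) : ℝ) : EReal) ≤
      f w + ((‖x - w‖ ^ 2 / (2 * lam) : ℝ) : EReal))
    (hs : ∀ x y : H, x ≠ y → ‖P x - P y‖ < ‖x - y‖) :
    StrictlyMonotoneSubdiff f := by
  intro x₀ x₁ v₀ v₁ h₀ h₁ hne
  rcases lt_or_ge 0 ⟪v₀ - v₁, x₀ - x₁⟫_ℝ with h | h
  · exact h
  exfalso
  obtain ⟨r₀, hr₀⟩ := subdiff_fin hp h₀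
  have haff := lem_affine hp hc hr₀ h₀ h₁ h 1 zero_le_one le_rfl
  rw [show (1 - (1:ℝ)) • x₀ + (1:ℝ) • x₁ = x₁ by simp] at haff
  have hA := proxA hp hc hlam hP h₀
  have hB := proxA hp hc hlam hP haff.1
  have hXY : x₀ + lam • v₀ ≠ x₁ + lam • v₀ := fun hE => hne (add_right_cancel hE)
  have hlt := hs _ _ hXY
  rw [hA, hB, show (x₀ + lam • v₀) - (x₁ + lam • v₀) = x₀ - x₁ by abel] at hlt
  exact lt_irrefl _ hlt

lemma asc_to_sms {f : H → EReal} (hp : IsProperFn f) (hc : IsConvexFn f)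
    (ha : AlmostStrictlyConvex f) : StrictlyMonotoneSubdiff f := by
  intro x₀ x₁ v₀ v₁ h₀ h₁ hne
  rcases lt_or_ge 0 ⟪v₀ - v₁, x₀ - x₁⟫_ℝ with h | h
  · exact h
  exfalso
  obtain ⟨r₀, hr₀⟩ := subdiff_fin hp h₀
  have haff := lem_affine hp hc hr₀ h₀ h₁ h
  have hsub : segment ℝ x₀ x₁ ⊆ domSubdiff f := by
    intro y hy
    rw [segment_eq_image] at hy
    obtain ⟨t, ht, hty⟩ := hy
    exact ⟨v₀, by rw [← hty]; exact (haff t ht.1 ht.2).1⟩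
  have hstrict := ha x₀ x₁ hne hsub x₀ (left_mem_segment ℝ x₀ x₁) x₁
    (right_mem_segment ℝ x₀ x₁) hne 2⁻¹ (by norm_num) (by norm_num)
  have hmid := (haff 2⁻¹ (by norm_num) (by norm_num)).2
  have h1' := (haff 1 zero_le_one le_rfl).2
  rw [show (1 - (1:ℝ)) • x₀ + (1:ℝ) • x₁ = x₁ by simp] at h1'
  rw [hmid, hr₀, h1', ← EReal.coe_mul, ← EReal.coe_mul, ← EReal.coe_add,
    EReal.coe_lt_coe_iff] at hstrict
  linarith

lemma sms_to_asc {f : H → EReal} (hp : IsProperFn f) (hc : IsConvexFn f)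
    (hm : StrictlyMonotoneSubdiff f) : AlmostStrictlyConvex f := by
  intro x₀ x₁ hne hseg a ha b hb hab t ht0 ht1
  obtain ⟨va, hva⟩ := hseg ha
  obtain ⟨vb, hvb⟩ := hseg hb
  have hmem : (1 - t) • a + t • b ∈ segment ℝ x₀ x₁ :=
    (convex_segment x₀ x₁) ha hb (by linarith) (le_of_lt ht0) (by ring)
  obtain ⟨vm, hvm⟩ := hseg hmem
  obtain ⟨ra, hra⟩ := subdiff_fin hp hva
  obtain ⟨rb, hrb⟩ := subdiff_fin hp hvb
  obtain ⟨rm, hrm⟩ := subdiff_fin hp hvm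
  set m : H := (1 - t) • a + t • b with hmdef
  have hup := hc a b t ht0 ht1
  rw [hra, hrb, hrm, ← EReal.coe_mul, ← EReal.coe_mul, ← EReal.coe_add,
    EReal.coe_le_coe_iff] at hup
  rw [hra, hrb, hrm, ← EReal.coe_mul, ← EReal.coe_mul, ← EReal.coe_add,
    EReal.coe_lt_coe_iff]
  rcases lt_or_ge rm ((1 - t) * ra + t * rb) with hlt | hge
  · exact hlt
  exfalso
  have heq : rm = (1 - t) * ra + t * rb := le_antisymm hup hge
  have hIa := subdiff_real hvm hrm hra
  have hIb := subdiff_real hvm hrm hrb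
  have hzero : (1 - t) • (a - m) + t • (b - m) = (0 : H) := by
    rw [hmdef]; module
  have hsum : (1 - t) * ⟪vm, a - m⟫_ℝ + t * ⟪vm, b - m⟫_ℝ = 0 := by
    rw [← real_inner_smul_right, ← real_inner_smul_right, ← inner_add_right, hzero,
      inner_zero_right]
  have hA : 0 ≤ ra - rm - ⟪vm, a - m⟫_ℝ := by linarith
  have hB : 0 ≤ rb - rm - ⟪vm, b - m⟫_ℝ := by linarith
  have hcomb : (1 - t) * (ra - rm - ⟪vm, a - m⟫_ℝ) + t * (rb - rm - ⟪vm, b - m⟫_ℝ) = 0 := by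
    linear_combination (-1 : ℝ) * heq - hsum
  have hAz : ra - rm - ⟪vm, a - m⟫_ℝ = 0 := by
    by_contra hAne
    have hApos : 0 < ra - rm - ⟪vm, a - m⟫_ℝ := lt_of_le_of_ne hA (Ne.symm hAne)
    have h1 : 0 < (1 - t) * (ra - rm - ⟪vm, a - m⟫_ℝ) := mul_pos (by linarith) hApos
    have h2 : 0 ≤ t * (rb - rm - ⟪vm, b - m⟫_ℝ) := mul_nonneg (le_of_lt ht0) hB
    linarith
  have hBz : rb - rm - ⟪vm, b - m⟫_ℝ = 0 := by
    by_contra hBne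
    have hBpos : 0 < rb - rm - ⟪vm, b - m⟫_ℝ := lt_of_le_of_ne hB (Ne.symm hBne)
    have h1 : 0 < t * (rb - rm - ⟪vm, b - m⟫_ℝ) := mul_pos ht0 hBpos
    have h2 : 0 ≤ (1 - t) * (ra - rm - ⟪vm, a - m⟫_ℝ) := mul_nonneg (by linarith) hA
    linarith
  have hsubm : ∀ (z : H) (rz : ℝ), f z = (rz : EReal) → rz = rm + ⟪vm, z - m⟫_ℝ →
      vm ∈ subdiff f z := by
    intro z rz hfz hrz y
    rw [hfz, hrz, ← EReal.coe_add]
    have hin : rm + ⟪vm, z - m⟫_ℝ + ⟪vm, y - z⟫_ℝ = rm + ⟪vm, y - m⟫_ℝ := by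
      have : ⟪vm, z - m⟫_ℝ + ⟪vm, y - z⟫_ℝ = ⟪vm, y - m⟫_ℝ := by
        rw [← inner_add_right]; congr 1; abel
      linarith
    rw [hin]
    have := hvm y
    rw [hrm, ← EReal.coe_add] at this
    exact this
  have hvma : vm ∈ subdiff f a := hsubm a ra hra (by linarith)
  have hvmb : vm ∈ subdiff f b := hsubm b rb hrb (by linarith)
  have := hm a b vm vm hvma hvmb hab
  simp at this

lemma sne_to_env {f : H → EReal} (hp : IsProperFn f) (hc : IsConvexFn f)
    {lam : ℝ} (hlam : 0 < lam) {P : H → H}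
    (hP : ∀ x w : H, f (P x) + ((‖x - P x‖ ^ 2 / (2 * lam) : ℝ) : EReal) ≤
      f w + ((‖x - w‖ ^ 2 / (2 * lam) : ℝ) : EReal))
    (hs : ∀ x y : H, x ≠ y → ‖P x - P y‖ < ‖x - y‖) :
    StrictConvexOnSet (moreauEnv f lam) Set.univ := by
  intro x _ y _ hxy t ht0 ht1
  obtain ⟨a, hax⟩ := fin_P hp hP x
  obtain ⟨b, hby⟩ := fin_P hp hP y
  set u : H := x - P x with hu
  set v : H := y - P y with hv
  have huv : u ≠ v := by
    intro h
    have h3 : P x - P y = x - y := by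
      rw [hu, hv, sub_eq_sub_iff_add_eq_add] at h
      rw [sub_eq_sub_iff_add_eq_add, h]
      exact add_comm _ _
    exact absurd (congrArg norm h3) (ne_of_lt (hs x y hxy))
  set z : H := (1 - t) • x + t • y with hz
  set w : H := (1 - t) • (P x) + t • (P y) with hw
  have h1 : moreauEnv f lam z ≤ f w + ((‖z - w‖ ^ 2 / (2 * lam) : ℝ) : EReal) := iInf_le _ w
  have h2 : f w ≤ (((1 - t) * a + t * b : ℝ) : EReal) := by
    have := hc (P x) (P y) t ht0 ht1
    rw [hax, hby, ← EReal.coe_mul, ← EReal.coe_mul, ← EReal.coe_add] at this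
    exact this
  have hzw : z - w = (1 - t) • u + t • v := by rw [hz, hw, hu, hv]; module
  have ht1' : (0:ℝ) < 1 - t := by linarith
  have hnorm : ‖z - w‖ ^ 2 < (1 - t) * ‖u‖ ^ 2 + t * ‖v‖ ^ 2 := by
    rw [hzw, norm_add_sq_real, real_inner_smul_left, real_inner_smul_right,
      norm_smul, norm_smul, Real.norm_eq_abs, Real.norm_eq_abs,
      abs_of_pos ht1', abs_of_pos ht0]
    have hexp := norm_sub_sq_real u v
    have hne0 : u - v ≠ 0 := sub_ne_zero.mpr huv
    have hpos : 0 < ‖u - v‖ ^ 2 := pow_pos (norm_pos_iff.mpr hne0) 2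
    nlinarith [hexp, hpos, mul_pos (mul_pos ht1' ht0) hpos]
  have h2l : (0:ℝ) < 2 * lam := by positivity
  have step : moreauEnv f lam z ≤
      (((1 - t) * a + t * b + ‖z - w‖ ^ 2 / (2 * lam) : ℝ) : EReal) := by
    refine le_trans h1 ?_
    rw [EReal.coe_add]
    exact add_le_add_left h2 _
  have henvx : moreauEnv f lam x = ((a + ‖u‖ ^ 2 / (2 * lam) : ℝ) : EReal) := by
    rw [env_eq hP x, hax, ← EReal.coe_add, ← hu]
  have henvy : moreauEnv f lam y = ((b + ‖v‖ ^ 2 / (2 * lam) : ℝ) : EReal) := by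
    rw [env_eq hP y, hby, ← EReal.coe_add, ← hv]
  have hfin : (((1 - t) * a + t * b + ‖z - w‖ ^ 2 / (2 * lam) : ℝ) : EReal) <
      ((1 - t : ℝ) : EReal) * moreauEnv f lam x + ((t : ℝ) : EReal) * moreauEnv f lam y := by
    rw [henvx, henvy, ← EReal.coe_mul, ← EReal.coe_mul, ← EReal.coe_add,
      EReal.coe_lt_coe_iff]
    have hdiv : 0 < ((1 - t) * ‖u‖ ^ 2 + t * ‖v‖ ^ 2 - ‖z - w‖ ^ 2) / (2 * lam) :=
      div_pos (by linarith) h2l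
    have hid : (1 - t) * (a + ‖u‖ ^ 2 / (2 * lam)) + t * (b + ‖v‖ ^ 2 / (2 * lam))
        - ((1 - t) * a + t * b + ‖z - w‖ ^ 2 / (2 * lam))
        = ((1 - t) * ‖u‖ ^ 2 + t * ‖v‖ ^ 2 - ‖z - w‖ ^ 2) / (2 * lam) := by
      field_simp; ring
    linarith
  exact lt_of_le_of_lt step hfin

lemma env_to_sms {f : H → EReal} (hp : IsProperFn f) (hc : IsConvexFn f)
    {lam : ℝ} (hlam : 0 < lam) {P : H → H}
    (hP : ∀ x w : H, f (P x) + ((‖x - P x‖ ^ 2 / (2 * lam) : ℝ) : EReal) ≤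
      f w + ((‖x - w‖ ^ 2 / (2 * lam) : ℝ) : EReal))
    (he : StrictConvexOnSet (moreauEnv f lam) Set.univ) :
    StrictlyMonotoneSubdiff f := by
  intro x₀ x₁ v₀ v₁ h₀ h₁ hne
  rcases lt_or_ge 0 ⟪v₀ - v₁, x₀ - x₁⟫_ℝ with h | h
  · exact h
  exfalso
  obtain ⟨r₀, hr₀⟩ := subdiff_fin hp h₀
  have haff := lem_affine hp hc hr₀ h₀ h₁ h
  set c : ℝ := ⟪v₀, x₁ - x₀⟫_ℝ with hcdef
  set K : ℝ := ‖lam • v₀‖ ^ 2 / (2 * lam) with hK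
  -- envelope value along the shifted segment
  have hval : ∀ t : ℝ, 0 ≤ t → t ≤ 1 →
      moreauEnv f lam (((1 - t) • x₀ + t • x₁) + lam • v₀)
        = ((r₀ + t * c + K : ℝ) : EReal) := by
    intro t h0 h1
    have hPz := proxA hp hc hlam hP (haff t h0 h1).1
    rw [env_eq hP _, hPz, (haff t h0 h1).2,
      show (((1 - t) • x₀ + t • x₁) + lam • v₀) - ((1 - t) • x₀ + t • x₁) = lam • v₀ by abel,
      ← hK, ← EReal.coe_add]
  have hXY : x₀ + lam • v₀ ≠ x₁ + lam • v₀ := fun hE => hne (add_right_cancel hE)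
  have hmid := he (x₀ + lam • v₀) trivial (x₁ + lam • v₀) trivial hXY 2⁻¹
    (by norm_num) (by norm_num)
  have hpt : (1 - (2⁻¹:ℝ)) • (x₀ + lam • v₀) + (2⁻¹:ℝ) • (x₁ + lam • v₀)
      = ((1 - (2⁻¹:ℝ)) • x₀ + (2⁻¹:ℝ) • x₁) + lam • v₀ := by module
  have hvm := hval 2⁻¹ (by norm_num) (by norm_num)
  have hv0 := hval 0 le_rfl zero_le_one
  have hv1 := hval 1 zero_le_one le_rfl
  rw [show ((1 - (0:ℝ)) • x₀ + (0:ℝ) • x₁) = x₀ by simp] at hv0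
  rw [show ((1 - (1:ℝ)) • x₀ + (1:ℝ) • x₁) = x₁ by simp] at hv1
  rw [hpt, hvm, hv0, hv1, ← EReal.coe_mul, ← EReal.coe_mul, ← EReal.coe_add,
    EReal.coe_lt_coe_iff] at hmid
  linarith


theorem stmt19 (f : H → EReal) (hp : IsProperFn f) (hlsc : LowerSemicontinuous f)
    (hc : IsConvexFn f) (lam : ℝ) (hlam : 0 < lam)
    (P : H → H)
    (hP : ∀ x w : H, f (P x) + ((‖x - P x‖ ^ 2 / (2 * lam) : ℝ) : EReal) ≤
      f w + ((‖x - w‖ ^ 2 / (2 * lam) : ℝ) : EReal)) :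
    (AlmostStrictlyConvex f ↔ StrictConvexOnSet (moreauEnv f lam) Set.univ) ∧
    (AlmostStrictlyConvex f ↔ (∀ x y : H, x ≠ y → ‖P x - P y‖ < ‖x - y‖)) := by
  have hA : AlmostStrictlyConvex f ↔ StrictlyMonotoneSubdiff f :=
    ⟨asc_to_sms hp hc, sms_to_asc hp hc⟩
  have hB : StrictlyMonotoneSubdiff f ↔ (∀ x y : H, x ≠ y → ‖P x - P y‖ < ‖x - y‖) :=
    ⟨sms_to_sne hp hc hlam hP, sne_to_sms hp hc hlam hP⟩
  constructor
  · exact ⟨fun ha => sne_to_env hp hc hlam hP (hB.mp (hA.mp ha)),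
      fun henv => hA.mpr (env_to_sms hp hc hlam hP henv)⟩
  · exact hA.trans hB
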